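/- arXiv:2006.14069 — 6 statements merged into one kernel-verified Lean document; each statement's English description precedes it below -/
import Mathlib

section
/- For a path graph (linear tree) on n ≥ 2 vertices, the maximum over all bijections π from the vertex set to {1,...,n} of the sum over edges {u,v} of |π(u) - π(v)| equals ⌊n²/2⌋ - 1. -/
open Finset

/-- The length of an edge under a linear arrangement `π` (positions `0,…,n-1`,
which gives the same lengths as positions `1,…,n`). -/
def edgeLen {n : ℕ} (π : Equiv.Perm (Fin n)) : Sym2 (Fin n) → ℕ :=
  Sym2.lift ⟨fun u v => ((π u : ℤ) - (π v : ℤ)).natAbs, fun u v => by dsimp only; omega⟩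

/-- The sum of edge lengths of the graph `G` under the linear arrangement `π`. -/
def D {n : ℕ} (G : SimpleGraph (Fin n)) [DecidableRel G.Adj] (π : Equiv.Perm (Fin n)) : ℕ :=
  ∑ e ∈ G.edgeFinset, edgeLen π e

/-- The maximum of `D` over all linear arrangements. -/
def Dmax {n : ℕ} (G : SimpleGraph (Fin n)) [DecidableRel G.Adj] : ℕ :=
  Finset.univ.sup (D G)

/-- The minimum of `D` over all linear arrangements. -/
def Dmin {n : ℕ} (G : SimpleGraph (Fin n)) [DecidableRel G.Adj] : ℕ :=
  Finset.univ.inf' ⟨Equiv.refl _, Finset.mem_univ _⟩ (D G)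

/-- The path graph (linear tree) on `n` vertices. -/
def pathG (n : ℕ) : SimpleGraph (Fin n) where
  Adj u v := (u : ℕ) + 1 = v ∨ (v : ℕ) + 1 = u
  symm := ⟨fun u v h => h.symm⟩
  loopless := ⟨fun u h => by omega⟩

instance (n : ℕ) : DecidableRel (pathG n).Adj :=
  fun u v => inferInstanceAs (Decidable (_ ∨ _))

/-- The star tree on `n` vertices, with hub at vertex `0`. -/
def starG (n : ℕ) : SimpleGraph (Fin n) where
  Adj u v := u ≠ v ∧ ((u : ℕ) = 0 ∨ (v : ℕ) = 0)
  symm := ⟨fun u v h => ⟨h.1.symm, h.2.symm⟩⟩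
  loopless := ⟨fun u h => h.1 rfl⟩

instance (n : ℕ) : DecidableRel (starG n).Adj :=
  fun u v => inferInstanceAs (Decidable (_ ∧ _))

/-- The bistar tree on `n` vertices with hub degrees `k1` and `n - k1`:
vertex `0` is a hub adjacent to vertex `1` and to the leaves `2,…,k1`;
vertex `1` is a hub adjacent to vertex `0` and to the leaves `k1+1,…,n-1`. -/
def bistarG (n k1 : ℕ) : SimpleGraph (Fin n) where
  Adj u v := u ≠ v ∧
    (((u : ℕ) = 0 ∧ ((v : ℕ) = 1 ∨ (2 ≤ (v : ℕ) ∧ (v : ℕ) ≤ k1))) ∨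
     ((v : ℕ) = 0 ∧ ((u : ℕ) = 1 ∨ (2 ≤ (u : ℕ) ∧ (u : ℕ) ≤ k1))) ∨
     ((u : ℕ) = 1 ∧ k1 < (v : ℕ)) ∨
     ((v : ℕ) = 1 ∧ k1 < (u : ℕ)))
  symm := ⟨fun u v h => ⟨h.1.symm, by tauto⟩⟩
  loopless := ⟨fun u h => h.1 rfl⟩

instance (n k1 : ℕ) : DecidableRel (bistarG n k1).Adj :=
  fun u v => inferInstanceAs (Decidable (_ ∧ _))

/-- The sum of the lengths of the edges incident to vertex `i` under arrangement `π`. -/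
def Dinc {n : ℕ} (G : SimpleGraph (Fin n)) [DecidableRel G.Adj] (i : Fin n)
    (π : Equiv.Perm (Fin n)) : ℕ :=
  ∑ v ∈ G.neighborFinset i, ((π i : ℤ) - (π v : ℤ)).natAbs

/-! Let `f 0, …, f (n-1)` be the positions of the path's vertices and `k = ⌊n/2⌋` the median
position. By the triangle inequality through `k`, the edge `{i, i+1}` has length at most
`|f i - k| + |f (i+1) - k|`; summing, `D ≤ 2 ∑ᵥ |f v - k| - |f 0 - k| - |f (n-1) - k|`. Since `f` is
a bijection onto `{0, …, n-1}`, `2 ∑ᵥ |f v - k| = 2 ∑ⱼ |j - k| = ⌊n²/2⌋`, and the two end terms do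
not both vanish, so `D ≤ ⌊n²/2⌋ - 1`. The arrangement that starts at `k`, alternates sides of `k`
and ends next to `k` makes every step tight. -/

theorem sum_castSucc_add_succ_add_ends {M : Type*} [AddCommMonoid M] {N : ℕ}
    (g : Fin (N + 1) → M) :
    ∑ i : Fin N, (g i.castSucc + g i.succ) + (g 0 + g (Fin.last N)) = 2 • ∑ i, g i := by
  rw [two_nsmul]
  nth_rw 1 [Fin.sum_univ_castSucc]
  rw [Fin.sum_univ_succ, sum_add_distrib]
  abel

section AbsSum

variable {G : Type*} [AddCommGroup G] [LinearOrder G] [IsOrderedAddMonoid G]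

theorem abs_sub_eq_abs_sub_add_abs_sub {a b k : G} (h : a ≤ k ∧ k ≤ b ∨ k ≤ a ∧ b ≤ k) :
    |a - b| = |a - k| + |b - k| := by
  have := (abs_add_eq_add_abs_iff (a - k) (k - b)).2 (by
    rcases h with ⟨h₁, h₂⟩ | ⟨h₁, h₂⟩
    · exact Or.inr ⟨sub_nonpos.2 h₁, sub_nonpos.2 h₂⟩
    · exact Or.inl ⟨sub_nonneg.2 h₁, sub_nonneg.2 h₂⟩)
  rwa [sub_add_sub_cancel, abs_sub_comm k b] at this

theorem sum_abs_sub_succ_add_ends_le {N : ℕ} (f : Fin (N + 1) → G) (k : G) :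
    ∑ i : Fin N, |f i.castSucc - f i.succ| + (|f 0 - k| + |f (Fin.last N) - k|) ≤
      2 • ∑ i, |f i - k| := by
  rw [← sum_castSucc_add_succ_add_ends]
  gcongr with i
  exact (abs_sub_le _ k _).trans_eq (by rw [abs_sub_comm k])

theorem sum_abs_sub_succ_add_ends_eq {N : ℕ} (f : Fin (N + 1) → G) (k : G)
    (h : ∀ i : Fin N, f i.castSucc ≤ k ∧ k ≤ f i.succ ∨ k ≤ f i.castSucc ∧ f i.succ ≤ k) :
    ∑ i : Fin N, |f i.castSucc - f i.succ| + (|f 0 - k| + |f (Fin.last N) - k|) =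
      2 • ∑ i, |f i - k| := by
  rw [← sum_castSucc_add_succ_add_ends]
  simp_rw [abs_sub_eq_abs_sub_add_abs_sub (h _)]

end AbsSum

theorem sum_range_abs_sub_middle (m r : ℕ) (hr : r ≤ 1) :
    ∑ j ∈ range (2 * m + r), |(j : ℤ) - m| = m ^ 2 + r * m := by
  induction m with
  | zero => interval_cases r <;> simp
  | succ m ih =>
    rw [show 2 * (m + 1) + r = 2 * m + r + 1 + 1 by ring, sum_range_succ', sum_range_succ]
    push_cast
    simp only [add_sub_add_right_eq_sub, ih]
    rw [abs_of_nonneg (by omega), abs_of_nonpos (by omega)]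
    ring

theorem two_mul_sum_range_abs_sub_half (n : ℕ) :
    2 * ∑ j ∈ range n, |(j : ℤ) - (n / 2 : ℕ)| = (n ^ 2 / 2 : ℕ) := by
  obtain ⟨m, rfl | rfl⟩ := Nat.even_or_odd' n
  · have := sum_range_abs_sub_middle m 0 zero_le_one
    rw [add_zero] at this
    rw [show 2 * m / 2 = m by omega, this, show (2 * m) ^ 2 / 2 = 2 * m ^ 2 by ring_nf; omega]
    push_cast; ring
  · have := sum_range_abs_sub_middle m 1 le_rfl
    rw [show (2 * m + 1) / 2 = m by omega, this,
      show (2 * m + 1) ^ 2 / 2 = 2 * m ^ 2 + 2 * m by ring_nf; omega]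
    push_cast; ring

theorem two_mul_sum_abs_perm_sub_half {n : ℕ} (π : Equiv.Perm (Fin n)) :
    2 * ∑ i, |(π i : ℤ) - (n / 2 : ℕ)| = (n ^ 2 / 2 : ℕ) := by
  rw [Equiv.sum_comp π (fun i => |(i : ℤ) - (n / 2 : ℕ)|),
    Fin.sum_univ_eq_sum_range (fun j => |(j : ℤ) - (n / 2 : ℕ)|), two_mul_sum_range_abs_sub_half]

theorem pathG_edgeFinset (m : ℕ) :
    (pathG (m + 1)).edgeFinset = univ.image fun i : Fin m => s(i.castSucc, i.succ) := by
  ext e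
  induction e using Sym2.ind with | _ u v => ?_
  rw [SimpleGraph.mem_edgeFinset, SimpleGraph.mem_edgeSet]
  simp only [pathG, mem_image, mem_univ, true_and, Sym2.eq_iff, Fin.ext_iff, Fin.val_castSucc,
    Fin.val_succ]
  constructor
  · rintro (h | h)
    · exact ⟨⟨u, by omega⟩, Or.inl ⟨rfl, h⟩⟩
    · exact ⟨⟨v, by omega⟩, Or.inr ⟨rfl, h⟩⟩
  · rintro ⟨i, h⟩
    omega

theorem D_pathG_eq (m : ℕ) (π : Equiv.Perm (Fin (m + 1))) :
    (D (pathG (m + 1)) π : ℤ) = ∑ i : Fin m, |(π i.castSucc : ℤ) - π i.succ| := by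
  rw [D, pathG_edgeFinset, sum_image fun i _ j _ h => by
    simp only [Sym2.eq_iff, Fin.ext_iff, Fin.val_castSucc, Fin.val_succ] at h; omega]
  push_cast [edgeLen, Sym2.lift_mk, Int.natCast_natAbs]
  rfl

theorem D_pathG_le {n : ℕ} (hn : 2 ≤ n) (π : Equiv.Perm (Fin n)) :
    D (pathG n) π ≤ n ^ 2 / 2 - 1 := by
  obtain ⟨m, rfl⟩ : ∃ m, n = m + 1 := ⟨n - 1, by omega⟩
  set k : ℤ := (((m + 1) / 2 : ℕ) : ℤ)
  have hends : 1 ≤ |(π 0 : ℤ) - k| + |(π (Fin.last m) : ℤ) - k| := by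
    have hne : (π 0 : ℤ) ≠ π (Fin.last m) := fun h => by
      have := π.injective (Fin.ext (by exact_mod_cast h))
      rw [Fin.ext_iff, Fin.val_zero, Fin.val_last] at this
      omega
    calc 1 ≤ |(π 0 : ℤ) - π (Fin.last m)| := Int.one_le_abs (sub_ne_zero.2 hne)
      _ ≤ _ := (abs_sub_le _ k _).trans_eq (by rw [abs_sub_comm k])
  have := sum_abs_sub_succ_add_ends_le (fun i => (π i : ℤ)) k
  rw [← D_pathG_eq, nsmul_eq_mul, Nat.cast_ofNat, two_mul_sum_abs_perm_sub_half] at this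
  omega

-- `⌊n/2⌋, 0, n-1, 1, n-2, 2, …`: alternately below and above the median, ending next to it.
noncomputable def zigzag (n : ℕ) : Equiv.Perm (Fin n) :=
  Equiv.ofBijective
    (fun i => ⟨if (i : ℕ) = 0 then n / 2 else if (i : ℕ) % 2 = 1 then i / 2 else n - i / 2,
      by split_ifs <;> omega⟩)
    (Finite.injective_iff_bijective.mp fun i j h => by
      simp only [Fin.mk.injEq] at h
      ext
      split_ifs at h <;> omega)

theorem zigzag_val (n : ℕ) (i : Fin n) :
    (zigzag n i : ℕ) =
      if (i : ℕ) = 0 then n / 2 else if (i : ℕ) % 2 = 1 then i / 2 else n - i / 2 :=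
  rfl

theorem D_pathG_zigzag {n : ℕ} (hn : 2 ≤ n) : D (pathG n) (zigzag n) = n ^ 2 / 2 - 1 := by
  obtain ⟨m, rfl⟩ : ∃ m, n = m + 1 := ⟨n - 1, by omega⟩
  set k : ℤ := (((m + 1) / 2 : ℕ) : ℤ)
  have hstraddle : ∀ i : Fin m,
      (zigzag (m + 1) i.castSucc : ℤ) ≤ k ∧ k ≤ zigzag (m + 1) i.succ ∨
        k ≤ zigzag (m + 1) i.castSucc ∧ (zigzag (m + 1) i.succ : ℤ) ≤ k := by
    intro i
    simp only [k, zigzag_val, Fin.val_castSucc, Fin.val_succ]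
    split_ifs <;> omega
  have hfirst : (zigzag (m + 1) 0 : ℤ) - k = 0 := by simp [k, zigzag_val]
  have hlast : |(zigzag (m + 1) (Fin.last m) : ℤ) - k| = 1 := by
    rw [abs_eq zero_le_one]
    simp only [k, zigzag_val, Fin.val_last]
    split_ifs <;> omega
  have := sum_abs_sub_succ_add_ends_eq (fun i => (zigzag (m + 1) i : ℤ)) k hstraddle
  rw [← D_pathG_eq, nsmul_eq_mul, Nat.cast_ofNat, two_mul_sum_abs_perm_sub_half, hfirst,
    abs_zero, hlast] at this
  omega

/-- For a path graph on `n ≥ 2` vertices, the maximum over all linear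
arrangements of the sum of edge lengths equals `⌊n²/2⌋ - 1`. -/
theorem pathG_Dmax (n : ℕ) (hn : 2 ≤ n) :
    Dmax (pathG n) = n ^ 2 / 2 - 1 :=
  le_antisymm (Finset.sup_le fun π _ => D_pathG_le hn π)
    ((D_pathG_zigzag hn).symm.le.trans (le_sup (mem_univ _)))
end

section
/- For a star tree on n ≥ 2 vertices, the maximum over all linear arrangements of the sum of edge lengths equals n(n-1)/2. -/
open Finset

/-!
Every edge of the star contains the hub, so if the hub sits at position `a`, then `D` is the sum
`∑_{x<n} |a - x|` of the distances from `a` to all positions. Split at `a`, this is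
`(1 + ⋯ + a) + (0 + ⋯ + (n-1-a))`, which is dominated termwise by
`((n-a) + ⋯ + (n-1)) + (0 + ⋯ + (n-1-a)) = ∑_{x<n} x = n(n-1)/2`; a hub at an end attains it.
-/

theorem sum_range_natAbs_sub_le_sum_range {a n : ℕ} (ha : a < n) :
    ∑ x ∈ range n, ((a : ℤ) - x).natAbs ≤ ∑ x ∈ range n, x := by
  obtain ⟨m, hm, rfl⟩ : ∃ m, 0 < m ∧ n = a + m := ⟨n - a, by omega, by omega⟩
  calc ∑ x ∈ range (a + m), ((a : ℤ) - x).natAbs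
      = ∑ i ∈ range a, ((a : ℤ) - i).natAbs + ∑ j ∈ range m, ((a : ℤ) - (a + j : ℕ)).natAbs :=
        sum_range_add _ a m
    _ = ∑ i ∈ range a, (i + 1) + ∑ j ∈ range m, j := by
        rw [← sum_range_reflect]
        congr 1 <;> refine sum_congr rfl fun i hi => ?_ <;> grind
    _ ≤ ∑ i ∈ range a, (m + i) + ∑ j ∈ range m, j :=
        add_le_add_left (sum_le_sum fun i _ => by omega) _
    _ = ∑ x ∈ range (a + m), x := by rw [add_comm a, sum_range_add, add_comm]

theorem D_eq_Dinc_of_forall_mem_edge {n : ℕ} (G : SimpleGraph (Fin n)) [DecidableRel G.Adj]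
    (i : Fin n) (hi : ∀ e ∈ G.edgeSet, i ∈ e) (π : Equiv.Perm (Fin n)) :
    D G π = Dinc G i π := by
  have hedges : G.edgeFinset = (G.neighborFinset i).image (fun v => s(i, v)) := by
    ext e
    rw [SimpleGraph.mem_edgeFinset, mem_image]
    constructor
    · intro he
      refine ⟨Sym2.Mem.other (hi e he), ?_, Sym2.other_spec _⟩
      rwa [SimpleGraph.mem_neighborFinset, ← SimpleGraph.mem_edgeSet, Sym2.other_spec]
    · rintro ⟨v, hv, rfl⟩
      exact (G.mem_neighborFinset i v).mp hv
  rw [D, hedges, sum_image fun v _ w _ h => Sym2.congr_right.mp h]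
  rfl

theorem Dinc_eq_sum_range_of_forall_adj {n : ℕ} (G : SimpleGraph (Fin n)) [DecidableRel G.Adj]
    (i : Fin n) (hi : ∀ v, i ≠ v → G.Adj i v) (π : Equiv.Perm (Fin n)) :
    Dinc G i π = ∑ x ∈ range n, ((π i : ℤ) - x).natAbs := by
  have hnbrs : G.neighborFinset i = univ.erase i := by
    ext v
    simpa [eq_comm] using ⟨fun h => G.ne_of_adj h, hi v⟩
  rw [Dinc, hnbrs, sum_erase _ (by simp), ← Fin.sum_univ_eq_sum_range]
  exact Equiv.sum_comp π fun x : Fin n => ((π i : ℤ) - x).natAbs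

theorem D_starG {m : ℕ} (π : Equiv.Perm (Fin (m + 1))) :
    D (starG (m + 1)) π = ∑ x ∈ range (m + 1), ((π 0 : ℤ) - x).natAbs := by
  rw [D_eq_Dinc_of_forall_mem_edge _ 0, Dinc_eq_sum_range_of_forall_adj]
  · exact fun v hv => ⟨hv, Or.inl rfl⟩
  · refine Sym2.ind fun u v ⟨_, h⟩ => ?_
    rcases h with h | h
    · rw [show u = 0 from Fin.ext h]
      exact Sym2.mem_mk_left _ _
    · rw [show v = 0 from Fin.ext h]
      exact Sym2.mem_mk_right _ _

theorem starG_Dmax_general (n : ℕ) :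
    Dmax (starG n) = n * (n - 1) / 2 := by
  rcases n with _ | m
  · simp [Dmax, D]
  rw [← sum_range_id]
  refine le_antisymm (Finset.sup_le fun π _ => ?_) ?_
  · rw [D_starG]
    exact sum_range_natAbs_sub_le_sum_range (π 0).isLt
  · calc ∑ x ∈ range (m + 1), x = D (starG (m + 1)) (Equiv.refl _) := by simp [D_starG]
      _ ≤ Dmax (starG (m + 1)) := le_sup (mem_univ _)

/-- For a star tree on `n ≥ 2` vertices, the maximum over all linear
arrangements of the sum of edge lengths equals `n(n-1)/2`. -/
theorem starG_Dmax (n : ℕ) (hn : 2 ≤ n) :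
    Dmax (starG n) = n * (n - 1) / 2 :=
  starG_Dmax_general n
end

section
/- For a bistar tree on n vertices with hub degrees k₁ and n - k₁ (k₁ ≥ n - k₁ ≥ 1), the maximum over all linear arrangements of the sum of edge lengths equals k₁(n - k₁) + n(n-3)/2 + 1. -/
open Finset

/-!
Only the hub positions `p, q` and the sets `S, T` of positions of their leaves matter, so an
arrangement is a partition of an integer interval `[lo, hi]` into `{p}, {q}, S, T`, and `D` is
`bistarCost p q S T`. If an endpoint of the interval carries a leaf, deleting it lowers the cost by
at most `hi - lo`, which is no more than the drop of the claimed bound; so by induction the hubs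
may be assumed to sit at the two endpoints. The cost is then
`(hi - lo) + ∑ x ∈ S, (x - lo) + ∑ y ∈ T, (hi - y)`, and the sharp bounds for sums of distinct
integers show that it is largest when the leaves of each hub are packed next to the other hub,
which is what the arrangement `v ↦ -v` of `Fin n` does.
-/

def bistarCost (p q : ℤ) (S T : Finset ℤ) : ℤ :=
  |p - q| + ∑ x ∈ S, |p - x| + ∑ y ∈ T, |q - y|

lemma bistarCost_comm (p q : ℤ) (S T : Finset ℤ) :
    bistarCost p q S T = bistarCost q p T S := by
  rw [bistarCost, bistarCost, abs_sub_comm]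
  ring

lemma bistarCost_erase_add {p q x : ℤ} {S : Finset ℤ} (T : Finset ℤ) (hx : x ∈ S) :
    bistarCost p q (S.erase x) T + |p - x| = bistarCost p q S T := by
  rw [bistarCost, bistarCost, ← sum_erase_add S _ hx]
  ring

lemma two_mul_sum_range_natCast (s : ℕ) : 2 * ∑ i ∈ range s, (i : ℤ) = s * (s - 1) := by
  induction s with
  | zero => simp
  | succ s ih => rw [sum_range_succ]; push_cast; linarith

lemma two_mul_sum_le_of_forall_le {S : Finset ℤ} {c : ℤ} (h : ∀ x ∈ S, x ≤ c) :
    2 * ∑ x ∈ S, x ≤ 2 * #S * c - #S * (#S - 1) := by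
  have := sum_le_sum_range h
  rw [sum_sub_distrib, sum_const, card_range, nsmul_eq_mul] at this
  linarith [two_mul_sum_range_natCast #S]

lemma two_mul_sum_ge_of_forall_ge {S : Finset ℤ} {c : ℤ} (h : ∀ x ∈ S, c ≤ x) :
    2 * #S * c + #S * (#S - 1) ≤ 2 * ∑ x ∈ S, x := by
  have := sum_range_le_sum h
  rw [sum_add_distrib, sum_const, card_range, nsmul_eq_mul] at this
  linarith [two_mul_sum_range_natCast #S]

lemma two_mul_bistarCost_le_of_hubs_at_ends {lo hi : ℤ} {S T : Finset ℤ}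
    (hS : ∀ x ∈ S, lo < x ∧ x < hi) (hT : ∀ y ∈ T, lo < y ∧ y < hi)
    (hN : hi - lo = #S + #T + 1) :
    2 * bistarCost lo hi S T ≤ 2 * (#S + 1) * (#T + 1) + (hi - lo) * (hi - lo - 1) := by
  have hSabs : ∑ x ∈ S, |lo - x| = ∑ x ∈ S, (x - lo) :=
    sum_congr rfl fun x hx => by rw [abs_sub_comm, abs_of_pos (sub_pos.2 (hS x hx).1)]
  have hTabs : ∑ y ∈ T, |hi - y| = ∑ y ∈ T, (hi - y) :=
    sum_congr rfl fun y hy => abs_of_pos (sub_pos.2 (hT y hy).2)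
  have hSsum := two_mul_sum_le_of_forall_le fun x hx => Int.le_sub_one_of_lt (hS x hx).2
  have hTsum := two_mul_sum_ge_of_forall_ge fun y hy => Int.add_one_le_of_lt (hT y hy).1
  rw [bistarCost, hSabs, hTabs, sum_sub_distrib, sum_sub_distrib, sum_const, sum_const,
    nsmul_eq_mul, nsmul_eq_mul, abs_of_neg (by linarith)]
  obtain rfl : hi = lo + #S + #T + 1 := by linarith
  linarith

lemma two_mul_bistarCost_ge_of_hubs_at_ends {lo hi : ℤ} {S T : Finset ℤ}
    (hS : ∀ x ∈ S, hi - #S ≤ x) (hT : ∀ y ∈ T, y ≤ lo + #T)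
    (hN : hi - lo = #S + #T + 1) :
    2 * (#S + 1) * (#T + 1) + (hi - lo) * (hi - lo - 1) ≤ 2 * bistarCost lo hi S T := by
  have hSabs : ∑ x ∈ S, (x - lo) ≤ ∑ x ∈ S, |lo - x| :=
    sum_le_sum fun x _ => by rw [abs_sub_comm]; exact le_abs_self _
  have hTabs : ∑ y ∈ T, (hi - y) ≤ ∑ y ∈ T, |hi - y| :=
    sum_le_sum fun y _ => le_abs_self _
  have hSsum := two_mul_sum_ge_of_forall_ge hS
  have hTsum := two_mul_sum_le_of_forall_le hT
  rw [sum_sub_distrib, sum_const, nsmul_eq_mul] at hSabs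
  rw [sum_sub_distrib, sum_const, nsmul_eq_mul] at hTabs
  rw [bistarCost, abs_of_neg (by linarith)]
  obtain rfl : hi = lo + #S + #T + 1 := by linarith
  linarith

lemma two_mul_bistarCost_le_of_erase {p q x N : ℤ} {S T : Finset ℤ} (hx : x ∈ S)
    (hpx : |p - x| ≤ N)
    (ih : 2 * bistarCost p q (S.erase x) T ≤
      2 * (#(S.erase x) + 1) * (#T + 1) + (N - 1) * (N - 2)) :
    2 * bistarCost p q S T ≤ 2 * (#S + 1) * (#T + 1) + N * (N - 1) := by
  have hcard : (#(S.erase x) : ℤ) + 1 = #S := by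
    have := card_pos.2 ⟨x, hx⟩
    rw [card_erase_of_mem hx]
    omega
  rw [hcard] at ih
  rw [← bistarCost_erase_add T hx]
  linarith [(#T).cast_nonneg (α := ℤ)]

structure IsBistarLayout {α : Type*} [DecidableEq α] (P : Finset α) (p q : α)
    (S T : Finset α) : Prop where
  ne : p ≠ q
  left_notMem : p ∉ S ∪ T
  right_notMem : q ∉ S ∪ T
  disjoint : Disjoint S T
  insert_insert_union : insert p (insert q (S ∪ T)) = P

namespace IsBistarLayout

section

variable {α : Type*} [DecidableEq α] {P : Finset α} {p q : α} {S T : Finset α}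

lemma symm (h : IsBistarLayout P p q S T) : IsBistarLayout P q p T S where
  ne := h.ne.symm
  left_notMem := union_comm S T ▸ h.right_notMem
  right_notMem := union_comm S T ▸ h.left_notMem
  disjoint := h.disjoint.symm
  insert_insert_union := by rw [insert_comm, union_comm, h.insert_insert_union]

lemma mem_iff (h : IsBistarLayout P p q S T) {x : α} :
    x ∈ P ↔ x = p ∨ x = q ∨ x ∈ S ∨ x ∈ T := by
  simp [← h.insert_insert_union]

lemma card_add_card (h : IsBistarLayout P p q S T) : #S + #T + 2 = #P := by
  rw [← h.insert_insert_union, card_insert_of_notMem, card_insert_of_notMem h.right_notMem,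
    card_union_of_disjoint h.disjoint]
  simpa [h.ne] using h.left_notMem

lemma erase_left (h : IsBistarLayout P p q S T) {x : α} (hx : x ∈ S) :
    IsBistarLayout (P.erase x) p q (S.erase x) T where
  ne := h.ne
  left_notMem := fun hp => h.left_notMem (union_subset_union (erase_subset x S) le_rfl hp)
  right_notMem := fun hq => h.right_notMem (union_subset_union (erase_subset x S) le_rfl hq)
  disjoint := h.disjoint.mono_left (erase_subset x S)
  insert_insert_union := by
    have hxT : x ∉ T := disjoint_left.1 h.disjoint hx
    have hxp : x ≠ p := fun e => h.left_notMem (e ▸ mem_union_left T hx)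
    have hxq : x ≠ q := fun e => h.right_notMem (e ▸ mem_union_left T hx)
    ext y
    rw [mem_erase, h.mem_iff]
    simp only [mem_insert, mem_union, mem_erase]
    grind

lemma image {β : Type*} [DecidableEq β] (h : IsBistarLayout P p q S T) {f : α → β}
    (hf : Function.Injective f) :
    IsBistarLayout (P.image f) (f p) (f q) (S.image f) (T.image f) where
  ne := hf.ne h.ne
  left_notMem := by rw [← image_union, hf.mem_finset_image]; exact h.left_notMem
  right_notMem := by rw [← image_union, hf.mem_finset_image]; exact h.right_notMem
  disjoint := (disjoint_image hf).2 h.disjoint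
  insert_insert_union := by
    rw [← h.insert_insert_union, image_insert, image_insert, image_union]

end

variable {lo hi p q : ℤ} {S T : Finset ℤ}

lemma sub_eq (h : IsBistarLayout (Icc lo hi) p q S T) : hi - lo = #S + #T + 1 := by
  have := h.card_add_card
  rw [Int.card_Icc] at this
  omega

lemma mem_Ioo (h : IsBistarLayout (Icc lo hi) lo hi S T) {x : ℤ} (hx : x ∈ S ∪ T) :
    lo < x ∧ x < hi := by
  have hlo : x ≠ lo := fun e => h.left_notMem (e ▸ hx)
  have hhi : x ≠ hi := fun e => h.right_notMem (e ▸ hx)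
  have : x ∈ Icc lo hi := h.insert_insert_union ▸ mem_insert_of_mem (mem_insert_of_mem hx)
  rw [mem_Icc] at this
  omega

lemma extreme_cases (h : IsBistarLayout (Icc lo hi) p q S T) :
    (lo ∈ S ∨ hi ∈ S) ∨ (lo ∈ T ∨ hi ∈ T) ∨
      (p = lo ∧ q = hi) ∨ (q = lo ∧ p = hi) := by
  have hlt : lo < hi := by linarith [h.sub_eq]
  have hlo := h.mem_iff.1 (left_mem_Icc.2 hlt.le)
  have hhi := h.mem_iff.1 (right_mem_Icc.2 hlt.le)
  have := h.ne
  grind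

end IsBistarLayout

theorem two_mul_bistarCost_le {lo hi p q : ℤ} {S T : Finset ℤ}
    (h : IsBistarLayout (Icc lo hi) p q S T) :
    2 * bistarCost p q S T ≤ 2 * (#S + 1) * (#T + 1) + (hi - lo) * (hi - lo - 1) := by
  induction hk : #S + #T using Nat.strong_induction_on generalizing lo hi p q S T with
  | _ k ih =>
  have swap : ∀ {S T : Finset ℤ},
      2 * bistarCost q p T S ≤ 2 * (#T + 1) * (#S + 1) + (hi - lo) * (hi - lo - 1) →
      2 * bistarCost p q S T ≤ 2 * (#S + 1) * (#T + 1) + (hi - lo) * (hi - lo - 1) := by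
    intro S T hb
    rwa [bistarCost_comm, mul_right_comm]
  have erase_extreme : ∀ {p q : ℤ} {S T : Finset ℤ}, IsBistarLayout (Icc lo hi) p q S T →
      #S + #T = k → lo ∈ S ∨ hi ∈ S →
      2 * bistarCost p q S T ≤ 2 * (#S + 1) * (#T + 1) + (hi - lo) * (hi - lo - 1) := by
    intro p q S T h hk hx
    obtain ⟨x, hx, lo', hi', hIcc, hlen⟩ : ∃ x ∈ S, ∃ lo' hi',
        (Icc lo hi).erase x = Icc lo' hi' ∧ hi' - lo' = hi - lo - 1 := by
      rcases hx with hx | hx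
      · exact ⟨lo, hx, lo + 1, hi, by ext; simp, by ring⟩
      · exact ⟨hi, hx, lo, hi - 1, by ext; simp, by ring⟩
    have hp := mem_Icc.1 (h.mem_iff.2 (Or.inl rfl))
    have hxI := mem_Icc.1 (h.mem_iff.2 (Or.inr (Or.inr (Or.inl hx))))
    refine two_mul_bistarCost_le_of_erase hx (abs_le.2 ⟨by linarith, by linarith⟩) ?_
    have h' := hIcc ▸ h.erase_left hx
    refine (ih _ ?_ h' rfl).trans_eq (by rw [hlen]; ring)
    rw [card_erase_of_mem hx]
    have := card_pos.2 ⟨x, hx⟩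
    omega
  rcases h.extreme_cases with hS | hT | ⟨rfl, rfl⟩ | ⟨rfl, rfl⟩
  · exact erase_extreme h hk hS
  · exact swap (erase_extreme h.symm (by omega) hT)
  · exact two_mul_bistarCost_le_of_hubs_at_ends (fun x hx => h.mem_Ioo (mem_union_left T hx))
      (fun y hy => h.mem_Ioo (mem_union_right S hy)) h.sub_eq
  · refine swap (two_mul_bistarCost_le_of_hubs_at_ends
      (fun x hx => h.symm.mem_Ioo (mem_union_left S hx))
      (fun y hy => h.symm.mem_Ioo (mem_union_right T hy)) h.symm.sub_eq)

def bistarLeaves₀ (n k1 : ℕ) : Finset (Fin n) :=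
  univ.filter fun v => 2 ≤ (v : ℕ) ∧ (v : ℕ) ≤ k1
def bistarLeaves₁ (n k1 : ℕ) : Finset (Fin n) := univ.filter fun v => k1 < (v : ℕ)

lemma edgeFinset_bistarG {m k1 : ℕ} (hk : 1 ≤ k1) :
    (bistarG (m + 2) k1).edgeFinset = insert s(0, 1)
      ((bistarLeaves₀ (m + 2) k1).image (s(0, ·)) ∪
        (bistarLeaves₁ (m + 2) k1).image (s(1, ·))) := by
  ext e
  induction e using Sym2.ind with
  | _ u v =>
  simp only [SimpleGraph.mem_edgeFinset, SimpleGraph.mem_edgeSet, mem_insert, mem_union, mem_image,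
    bistarLeaves₀, bistarLeaves₁, mem_filter, mem_univ, true_and, Sym2.eq_iff, and_or_left,
    exists_or, exists_eq_right_right]
  change (u ≠ v ∧ _) ↔ _
  simp only [Fin.ext_iff, Fin.val_zero, Fin.val_one, ne_eq]
  omega

def position {n : ℕ} (π : Equiv.Perm (Fin n)) (v : Fin n) : ℤ := (π v : ℕ)

lemma position_injective {n : ℕ} (π : Equiv.Perm (Fin n)) : Function.Injective (position π) :=
  (Nat.cast_injective.comp Fin.val_injective).comp π.injective

lemma natCast_edgeLen_mk {n : ℕ} (π : Equiv.Perm (Fin n)) (u v : Fin n) :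
    (edgeLen π s(u, v) : ℤ) = |position π u - position π v| := by
  simp [edgeLen, position]

lemma D_bistarG {m k1 : ℕ} (hk : 1 ≤ k1) (π : Equiv.Perm (Fin (m + 2))) :
    (D (bistarG (m + 2) k1) π : ℤ) = bistarCost (position π 0) (position π 1)
      ((bistarLeaves₀ (m + 2) k1).image (position π))
      ((bistarLeaves₁ (m + 2) k1).image (position π)) := by
  have hinj := position_injective π
  rw [D, edgeFinset_bistarG hk, sum_insert, sum_union, sum_image, sum_image]
  · push_cast
    simp only [natCast_edgeLen_mk, bistarCost, sum_image hinj.injOn, add_assoc]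
  · exact fun _ _ _ _ h => Sym2.congr_right.1 h
  · exact fun _ _ _ _ h => Sym2.congr_right.1 h
  · simp only [disjoint_left, mem_image, bistarLeaves₀, bistarLeaves₁, mem_filter, mem_univ,
      true_and, not_exists, not_and]
    rintro _ ⟨a, ha, rfl⟩ b hb h
    simp only [Sym2.eq_iff, Fin.ext_iff, Fin.val_zero, Fin.val_one] at h
    omega
  · simp only [mem_union, mem_image, bistarLeaves₀, bistarLeaves₁, mem_filter, mem_univ,
      true_and, not_or, not_exists, not_and, Sym2.eq_iff, Fin.ext_iff, Fin.val_zero, Fin.val_one]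
    exact ⟨fun x hx => by omega, fun x hx => by omega⟩

lemma card_bistarLeaves₀ {n k1 : ℕ} (hk : k1 < n) : #(bistarLeaves₀ n k1) = k1 - 1 := by
  have : (bistarLeaves₀ n k1).map Fin.valEmbedding = Icc 2 k1 := by
    ext x
    simp [bistarLeaves₀, Fin.exists_iff]
    omega
  rw [← card_map, this, Nat.card_Icc]
  omega

lemma card_bistarLeaves₁ (n k1 : ℕ) : #(bistarLeaves₁ n k1) = n - k1 - 1 := by
  have : (bistarLeaves₁ n k1).map Fin.valEmbedding = Ioo k1 n := by
    ext x
    simp [bistarLeaves₁, Fin.exists_iff]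
  rw [← card_map, this, Nat.card_Ioo]

lemma isBistarLayout_bistarLeaves {m k1 : ℕ} (hk : 1 ≤ k1) :
    IsBistarLayout univ (0 : Fin (m + 2)) 1 (bistarLeaves₀ (m + 2) k1)
      (bistarLeaves₁ (m + 2) k1) where
  ne := by simp
  left_notMem := by simp [bistarLeaves₀, bistarLeaves₁]
  right_notMem := by simp [bistarLeaves₀, bistarLeaves₁]; omega
  disjoint := by simp [bistarLeaves₀, bistarLeaves₁, disjoint_left]
  insert_insert_union := by
    ext v
    simp only [bistarLeaves₀, bistarLeaves₁, mem_insert, mem_union, mem_filter, mem_univ,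
      true_and, iff_true, Fin.ext_iff, Fin.val_zero, Fin.val_one]
    omega

lemma image_position_univ {n : ℕ} (π : Equiv.Perm (Fin n)) :
    univ.image (position π) = Icc 0 ((n : ℤ) - 1) := by
  ext x
  simp only [mem_image, mem_univ, true_and, mem_Icc, position]
  constructor
  · rintro ⟨v, rfl⟩
    have := (π v).isLt
    omega
  · rintro ⟨h0, h1⟩
    exact ⟨π.symm ⟨x.toNat, by omega⟩, by simp; omega⟩

lemma two_mul_D_bistarG_le {m k1 : ℕ} (hk : 1 ≤ k1) (hkm : k1 ≤ m + 1)
    (π : Equiv.Perm (Fin (m + 2))) :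
    2 * (D (bistarG (m + 2) k1) π : ℤ) ≤ 2 * k1 * (m + 2 - k1) + (m + 1) * m := by
  have h := (isBistarLayout_bistarLeaves hk).image (position_injective π)
  rw [image_position_univ] at h
  have hS : (#(bistarLeaves₀ (m + 2) k1) : ℤ) + 1 = k1 := by
    rw [card_bistarLeaves₀ (by omega)]
    omega
  have hT : (#(bistarLeaves₁ (m + 2) k1) : ℤ) + 1 = m + 2 - k1 := by
    rw [card_bistarLeaves₁]
    omega
  rw [D_bistarG hk]
  refine (two_mul_bistarCost_le h).trans_eq ?_
  rw [card_image_of_injective _ (position_injective π),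
    card_image_of_injective _ (position_injective π), hS, hT]
  push_cast
  ring

lemma position_neg {m : ℕ} {v : Fin (m + 2)} (hv : v ≠ 0) :
    position (Equiv.neg (Fin (m + 2))) v = m + 2 - (v : ℕ) := by
  have := Fin.val_ne_zero_iff.2 hv
  rw [position, Equiv.neg_apply, Fin.val_neg', Nat.mod_eq_of_lt (by omega)]
  omega

lemma le_two_mul_D_bistarG_neg {m k1 : ℕ} (hk : 1 ≤ k1) (hkm : k1 ≤ m + 1) :
    2 * k1 * (m + 2 - k1) + (m + 1) * m ≤
      2 * (D (bistarG (m + 2) k1) (Equiv.neg (Fin (m + 2))) : ℤ) := by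
  set π := Equiv.neg (Fin (m + 2))
  have hS : (#(bistarLeaves₀ (m + 2) k1) : ℤ) = k1 - 1 := by
    rw [card_bistarLeaves₀ (by omega)]
    omega
  have hT : (#(bistarLeaves₁ (m + 2) k1) : ℤ) = m + 1 - k1 := by
    rw [card_bistarLeaves₁]
    omega
  have h0 : position π 0 = 0 := by simp [position, π]
  have h1 : position π 1 = m + 1 := by rw [position_neg one_ne_zero, Fin.val_one]; ring
  rw [D_bistarG hk, h0, h1]
  refine Eq.trans_le ?_ (two_mul_bistarCost_ge_of_hubs_at_ends ?_ ?_ ?_) <;>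
    simp only [card_image_of_injective _ (position_injective π), hS, hT, forall_mem_image]
  · ring
  · intro v hv
    simp only [bistarLeaves₀, mem_filter, mem_univ, true_and] at hv
    rw [position_neg (Fin.val_ne_zero_iff.1 (by omega))]
    omega
  · intro v hv
    simp only [bistarLeaves₁, mem_filter, mem_univ, true_and] at hv
    rw [position_neg (Fin.val_ne_zero_iff.1 (by omega))]
    omega
  · ring

lemma D_le_Dmax {n : ℕ} (G : SimpleGraph (Fin n)) [DecidableRel G.Adj] (π : Equiv.Perm (Fin n)) :
    D G π ≤ Dmax G :=
  le_sup (mem_univ π)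

lemma exists_D_eq_Dmax {n : ℕ} (G : SimpleGraph (Fin n)) [DecidableRel G.Adj] :
    ∃ π, D G π = Dmax G := by
  obtain ⟨π, -, h⟩ := exists_mem_eq_sup univ univ_nonempty (D G)
  exact ⟨π, h.symm⟩

/-- For a bistar tree on `n` vertices with hub degrees `k₁ ≥ n - k₁ ≥ 1`,
the maximum over all linear arrangements of the sum of edge lengths equals
`k₁(n - k₁) + n(n-3)/2 + 1`. -/
theorem bistar_Dmax (n k1 : ℕ) (h1 : k1 < n) (h2 : n ≤ 2 * k1) :
    (Dmax (bistarG n k1) : ℤ) =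
      (k1 : ℤ) * ((n : ℤ) - k1) + (n : ℤ) * ((n : ℤ) - 3) / 2 + 1 := by
  obtain ⟨m, rfl⟩ : ∃ m, n = m + 2 := ⟨n - 2, by omega⟩
  have hk : 1 ≤ k1 := by omega
  have hkm : k1 ≤ m + 1 := by omega
  obtain ⟨π, hπ⟩ := exists_D_eq_Dmax (bistarG (m + 2) k1)
  have hle := two_mul_D_bistarG_le hk hkm π
  have hge := le_two_mul_D_bistarG_neg hk hkm
  have hneg : (D (bistarG (m + 2) k1) (Equiv.neg _) : ℤ) ≤ Dmax (bistarG (m + 2) k1) :=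
    mod_cast D_le_Dmax _ _
  rw [hπ] at hle
  rw [mul_assoc] at hle hge
  push_cast
  rw [show ((m : ℤ) + 2) * (m + 2 - 3) = (m + 1) * m - 2 by ring]
  omega
end

section
/- For any tree t on n vertices, the maximum over all linear arrangements of the sum of edge lengths satisfies D_max(t) ≤ (3(n-1)² + 1 - (n mod 2))/4, with equality achieved by the balanced bistar tree. -/
open Finset

/-!
Put the centre of an arrangement `π` at `(n - 1) / 2` and let `f v = |2 π(v) + 1 - n|` be twice
the distance of `π v` from it (with positions `0, …, n - 1`). By the triangle inequality through
the centre, `2 |π u - π v| ≤ f u + f v`, so `2 D ≤ ∑ v, deg v · f v`. In a tree on `n ≥ 2`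
vertices every degree is at least `1` and the excess degrees `deg v - 1` sum to `n - 2`; as
`f v ≤ n - 1` and `∑ v, f v = ⌊n² / 2⌋`, this gives `2 D ≤ ⌊n² / 2⌋ + (n - 2)(n - 1)`.
The balanced bistar attains it with one hub at each end of the arrangement and the leaves of
each hub in the far half: every edge then crosses the centre and only the hubs have degree > 1.
-/

theorem sum_range_natAbs_two_mul_add_one_sub :
    ∀ n : ℕ, ∑ p ∈ range n, (2 * (p : ℤ) + 1 - n).natAbs = n ^ 2 / 2
  | 0 => rfl
  | 1 => rfl
  | n + 2 => by
    have ih := sum_range_natAbs_two_mul_add_one_sub n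
    rw [sum_range_succ, sum_range_succ']
    push_cast
    have hshift : ∑ p ∈ range n, (2 * ((p : ℤ) + 1) + 1 - (n + 2)).natAbs
        = ∑ p ∈ range n, (2 * (p : ℤ) + 1 - n).natAbs :=
      sum_congr rfl fun p _ => by ring_nf
    rw [hshift, ih]
    have : (n + 2) ^ 2 = n ^ 2 + 4 * n + 4 := by ring
    omega

theorem two_mul_sum_range_max_sub (N : ℕ) :
    2 * ∑ i ∈ range (N + 1), max i (N + 1 - i) = (N + 2) ^ 2 / 2 + N * (N + 1) := by
  have hterm : ∀ i ∈ range (N + 1),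
      2 * max i (N + 1 - i) = N + 1 + (2 * (i : ℤ) + 1 - (N + 2 : ℕ)).natAbs :=
    fun i _ => by omega
  have hlast := sum_range_natAbs_two_mul_add_one_sub (N + 2)
  rw [sum_range_succ] at hlast
  rw [mul_sum, sum_congr rfl hterm, sum_add_distrib, sum_const, card_range, smul_eq_mul]
  have : (N + 1) * (N + 1) = N * (N + 1) + (N + 1) := by ring
  omega

theorem div_two_add_mul_div_two (n : ℕ) :
    (n ^ 2 / 2 + (n - 2) * (n - 1)) / 2 = (3 * (n - 1) ^ 2 + 1 - n % 2) / 4 := by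
  rcases n with _ | _ | m
  · rfl
  · rfl
  rw [show m + 1 + 1 - 2 = m by omega, show m + 1 + 1 - 1 = m + 1 by omega]
  obtain ⟨c, rfl | rfl⟩ := Nat.even_or_odd' m <;> ring_nf <;> omega

namespace SimpleGraph

variable {V M : Type*} [Fintype V] [AddCommMonoid M] (G : SimpleGraph V) [DecidableRel G.Adj]

theorem sum_darts_edge [DecidableEq V] (F : Sym2 V → M) :
    ∑ d : G.Dart, F d.edge = 2 • ∑ e ∈ G.edgeFinset, F e := by
  rw [← sum_fiberwise_of_maps_to (g := Dart.edge) (t := G.edgeFinset)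
    (fun d _ => (G.mem_edgeFinset).2 d.edge_mem), smul_sum]
  refine sum_congr rfl fun e he => ?_
  rw [sum_congr rfl fun d hd => congrArg F (mem_filter.1 hd).2, sum_const,
    G.dart_edge_fiber_card e (G.mem_edgeFinset.1 he)]

theorem sum_darts_fst (g : V → M) : ∑ d : G.Dart, g d.fst = ∑ v, G.degree v • g v := by
  classical
  rw [← sum_fiberwise_of_maps_to (g := fun d : G.Dart => d.fst) (t := univ)
    (fun d _ => mem_univ _)]
  refine sum_congr rfl fun v _ => ?_
  rw [sum_congr rfl fun d hd => congrArg g (mem_filter.1 hd).2, sum_const]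
  congr 1
  convert G.dart_fst_fiber_card_eq_degree v

theorem sum_darts_snd (g : V → M) : ∑ d : G.Dart, g d.snd = ∑ d : G.Dart, g d.fst :=
  Fintype.sum_equiv Dart.symm_involutive.toPerm _ _ fun _ => rfl

end SimpleGraph

theorem two_mul_D_le {n : ℕ} (G : SimpleGraph (Fin n)) [DecidableRel G.Adj]
    (hdeg : ∀ v, 0 < G.degree v) (π : Equiv.Perm (Fin n)) :
    2 * D G π ≤ n ^ 2 / 2 + (2 * #G.edgeFinset - n) * (n - 1) := by
  let f : Fin n → ℕ := fun v => (2 * (π v : ℤ) + 1 - n).natAbs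
  have hf_le : ∀ v, f v ≤ n - 1 := fun v => by have := (π v).is_lt; dsimp only [f]; omega
  have hsum_f : ∑ v, f v = n ^ 2 / 2 := by
    rw [Equiv.sum_comp π fun p => (2 * (p : ℤ) + 1 - n).natAbs,
      Fin.sum_univ_eq_sum_range fun p => (2 * (p : ℤ) + 1 - n).natAbs,
      sum_range_natAbs_two_mul_add_one_sub]
  have hsum_deg : ∑ v, (G.degree v - 1) = 2 * #G.edgeFinset - n := by
    rw [sum_tsub_distrib _ fun v _ => hdeg v, G.sum_degrees_eq_twice_card_edges]
    simp
  have hdarts : 2 * D G π ≤ ∑ v, G.degree v * f v := by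
    refine Nat.le_of_mul_le_mul_left ?_ two_pos
    calc 2 * (2 * D G π) = 2 * ∑ d : G.Dart, edgeLen π d.edge := by
          rw [G.sum_darts_edge, D, smul_eq_mul]
      _ ≤ ∑ d : G.Dart, (f d.fst + f d.snd) := by
          rw [mul_sum]
          exact sum_le_sum fun d _ => by
            change 2 * ((π d.fst : ℤ) - π d.snd).natAbs ≤ _
            dsimp only [f]
            omega
      _ = 2 * ∑ v, G.degree v * f v := by
          simp only [sum_add_distrib, G.sum_darts_snd, G.sum_darts_fst, smul_eq_mul, two_mul]
  calc 2 * D G π ≤ ∑ v, G.degree v * f v := hdarts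
    _ ≤ ∑ v, (f v + (G.degree v - 1) * (n - 1)) := sum_le_sum fun v _ => by
        obtain ⟨k, hk⟩ := Nat.exists_eq_add_of_lt (hdeg v)
        rw [hk, zero_add, Nat.add_sub_cancel, add_mul, one_mul, add_comm]
        exact Nat.add_le_add_left (Nat.mul_le_mul_left k (hf_le v)) _
    _ = n ^ 2 / 2 + (2 * #G.edgeFinset - n) * (n - 1) := by
        rw [sum_add_distrib, ← sum_mul, hsum_f, hsum_deg]

theorem D_eq_zero_of_le_one {n : ℕ} (hn : n ≤ 1) (G : SimpleGraph (Fin n)) [DecidableRel G.Adj]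
    (π : Equiv.Perm (Fin n)) : D G π = 0 :=
  sum_eq_zero fun e _ => by
    induction e using Sym2.ind with
    | _ u v =>
      change ((π u : ℤ) - π v).natAbs = 0
      have := (π u).is_lt
      have := (π v).is_lt
      omega

theorem Dmax_eq_zero_of_le_one {n : ℕ} (hn : n ≤ 1) (G : SimpleGraph (Fin n))
    [DecidableRel G.Adj] : Dmax G = 0 :=
  Nat.eq_zero_of_le_zero <| Finset.sup_le fun π _ => (D_eq_zero_of_le_one hn G π).le

theorem SimpleGraph.IsTree.Dmax_le {n : ℕ} {G : SimpleGraph (Fin n)} [DecidableRel G.Adj]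
    (hG : G.IsTree) : Dmax G ≤ (3 * (n - 1) ^ 2 + 1 - n % 2) / 4 := by
  rcases Nat.lt_or_ge n 2 with hn | hn
  · rw [Dmax_eq_zero_of_le_one (by omega)]
    exact Nat.zero_le _
  have : Nontrivial (Fin n) := Fin.nontrivial_iff_two_le.2 hn
  have hcard := hG.card_edgeFinset
  rw [Fintype.card_fin] at hcard
  refine Finset.sup_le fun π _ => ?_
  have hD := two_mul_D_le G (fun v => hG.connected.preconnected.degree_pos_of_nontrivial v) π
  rw [show 2 * #G.edgeFinset - n = n - 2 by omega] at hD
  rw [← div_two_add_mul_div_two]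
  omega

def bistarEdge (m k : ℕ) (i : Fin (m + 1)) : Sym2 (Fin (m + 2)) :=
  s(if (i : ℕ) < k then 0 else 1, i.succ)

theorem bistarEdge_injective (m k : ℕ) : Function.Injective (bistarEdge m k) := by
  intro i j h
  refine Fin.ext ?_
  simp only [bistarEdge, Sym2.eq_iff, Fin.ext_iff, Fin.val_succ, apply_ite Fin.val, Fin.val_zero,
    Fin.val_one] at h
  split_ifs at h <;> simp only [false_and, and_false, or_false] at h <;> omega

theorem edgeFinset_bistarG_s6 {m k : ℕ} (hk : 1 ≤ k) :
    (bistarG (m + 2) k).edgeFinset = univ.map ⟨bistarEdge m k, bistarEdge_injective m k⟩ := by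
  ext e
  induction e using Sym2.ind with
  | _ u v =>
  rw [SimpleGraph.mem_edgeFinset, SimpleGraph.mem_edgeSet]
  simp only [bistarG, mem_map, mem_univ, true_and, Function.Embedding.coeFn_mk, bistarEdge,
    Sym2.eq_iff, Fin.ext_iff, Fin.exists_iff, Fin.val_succ, apply_ite Fin.val, Fin.val_zero,
    Fin.val_one]
  constructor
  · intro h
    exact ⟨max (u : ℕ) v - 1, by omega, by split_ifs <;> omega⟩
  · rintro ⟨i, hi, h⟩
    split_ifs at h <;> omega

theorem bistarG_connected (m k : ℕ) : (bistarG (m + 2) k).Connected := by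
  rw [SimpleGraph.connected_iff_exists_forall_reachable]
  refine ⟨0, fun v => ?_⟩
  have h01 : (bistarG (m + 2) k).Adj 0 1 := by
    simp only [bistarG, ne_eq, Fin.ext_iff, Fin.val_zero, Fin.val_one, true_and, true_or, and_true]
    omega
  obtain rfl | h0 | h1 : v = 0 ∨ (bistarG (m + 2) k).Adj 0 v ∨ (bistarG (m + 2) k).Adj 1 v := by
    simp only [bistarG, ne_eq, Fin.ext_iff, Fin.val_zero, Fin.val_one, true_and, true_or]
    omega
  · rfl
  · exact h0.reachable
  · exact h01.reachable.trans h1.reachable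

theorem bistarG_isTree {m k : ℕ} (hk : 1 ≤ k) : (bistarG (m + 2) k).IsTree := by
  rw [SimpleGraph.isTree_iff_connected_and_card]
  refine ⟨bistarG_connected m k, ?_⟩
  rw [Nat.card_eq_fintype_card, ← SimpleGraph.edgeFinset_card, edgeFinset_bistarG_s6 hk]
  simp

-- `(finRotate _).symm` puts hub `0` last, hub `1` first and vertex `j ≥ 2` at position `j - 1`.
theorem edgeLen_bistarEdge {m k : ℕ} (i : Fin (m + 1)) :
    edgeLen (finRotate (m + 2)).symm (bistarEdge m k i) =
      if (i : ℕ) < k then m + 1 - i else i := by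
  have h0 : ((finRotate (m + 2)).symm 0 : ℕ) = m + 1 := by simp
  have h1 : ((finRotate (m + 2)).symm 1 : ℕ) = 0 := by simp
  have hs : ((finRotate (m + 2)).symm i.succ : ℕ) = i := by
    rw [finRotate_symm_apply, Fin.coe_sub_one, if_neg i.succ_ne_zero, Fin.val_succ,
      Nat.add_sub_cancel]
  unfold edgeLen bistarEdge
  split_ifs <;> simp only [Sym2.lift_mk, h0, h1, hs] <;> omega

theorem D_balanced_bistarG_finRotate_symm (m : ℕ) :
    D (bistarG (m + 2) ((m + 2 + 1) / 2)) (finRotate (m + 2)).symm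
      = (3 * (m + 2 - 1) ^ 2 + 1 - (m + 2) % 2) / 4 := by
  have hmax : D (bistarG (m + 2) ((m + 2 + 1) / 2)) (finRotate (m + 2)).symm
      = ∑ i ∈ range (m + 1), max i (m + 1 - i) := by
    rw [D, edgeFinset_bistarG_s6 (by omega), sum_map]
    simp only [Function.Embedding.coeFn_mk, edgeLen_bistarEdge]
    rw [Fin.sum_univ_eq_sum_range fun i => if i < (m + 2 + 1) / 2 then m + 1 - i else i]
    exact sum_congr rfl fun i _ => by split_ifs <;> omega
  have h2 := two_mul_sum_range_max_sub m
  rw [← div_two_add_mul_div_two, hmax, show m + 2 - 2 = m by omega,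
    show m + 2 - 1 = m + 1 by omega]
  omega

/-- For any tree on `n` vertices, `D_max ≤ (3(n-1)² + 1 - (n mod 2))/4`,
with equality achieved by the balanced bistar tree (hub degrees `⌈n/2⌉` and `⌊n/2⌋`). -/
theorem Dmax_le_balanced_bistar (n : ℕ) :
    (∀ (G : SimpleGraph (Fin n)) (_ : DecidableRel G.Adj), G.IsTree →
      Dmax G ≤ (3 * (n - 1) ^ 2 + 1 - n % 2) / 4) ∧
    Dmax (bistarG n ((n + 1) / 2)) = (3 * (n - 1) ^ 2 + 1 - n % 2) / 4 := by
  refine ⟨fun G _ hG => hG.Dmax_le, ?_⟩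
  obtain hn | ⟨m, rfl⟩ : n ≤ 1 ∨ ∃ m, n = m + 2 := by
    rcases n with _ | _ | m <;> simp
  · rw [Dmax_eq_zero_of_le_one hn]
    interval_cases n <;> rfl
  · refine le_antisymm (bistarG_isTree (by omega)).Dmax_le ?_
    rw [← D_balanced_bistarG_finRotate_symm]
    exact le_sup (mem_univ _)
end

section
/- Let g be a graph on n vertices, let vertex i have degree kᵢ, and fix any linear arrangement π. Then the sum of lengths of the edges incident to vertex i is at least (kᵢ²/2 + kᵢ + (kᵢ mod 2)/2)/2. -/
/-!
Split the neighbours of `i` into those placed left and those placed right of `i`. On each side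
the edge lengths are distinct positive integers, so a side with `m` neighbours contributes at
least `1 + ⋯ + m = m(m+1)/2`. For side sizes `a + b = kᵢ`, `a(a+1)/2 + b(b+1)/2` exceeds the bound by
`((a - b)² - kᵢ mod 2)/4`, which is nonnegative because `a - b ≡ kᵢ (mod 2)`.
-/

open Finset

theorem Int.emod_two_le_sq_sub (a b : ℤ) : (a + b) % 2 ≤ (a - b) ^ 2 := by
  rcases Int.emod_two_eq_zero_or_one (a + b) with h | h
  · rw [h]; positivity
  · have : a - b ≠ 0 := by omega
    rw [h]
    have : 0 < (a - b) ^ 2 := by positivity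
    linarith

namespace Finset

theorem card_mul_succ_le_two_mul_sum_of_one_le {s : Finset ℤ} (hs : ∀ x ∈ s, 1 ≤ x) :
    (#s : ℤ) * (#s + 1) ≤ 2 * ∑ x ∈ s, x := by
  have gauss : ∀ m : ℕ, 2 * ∑ n ∈ range m, (1 + (n : ℤ)) = m * (m + 1) := by
    intro m
    induction m with
    | zero => simp
    | succ m ih => rw [sum_range_succ, mul_add, ih]; push_cast; ring
  rw [← gauss]
  exact mul_le_mul_of_nonneg_left (sum_range_le_sum hs) zero_le_two

theorem card_mul_succ_le_two_mul_sum_abs_sub {s : Finset ℤ} {c : ℤ}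
    (hside : (∀ x ∈ s, x < c) ∨ ∀ x ∈ s, c < x) :
    (#s : ℤ) * (#s + 1) ≤ 2 * ∑ x ∈ s, |c - x| := by
  have hinj : Set.InjOn (fun x => |c - x|) s := by
    intro x hx y hy hxy
    rcases abs_eq_abs.1 hxy with h | h <;> rcases hside with hs | hs <;>
      linarith [hs x hx, hs y hy]
  have hpos : ∀ d ∈ s.image (fun x => |c - x|), 1 ≤ d := by
    simp only [mem_image, forall_exists_index, and_imp, forall_apply_eq_imp_iff₂]
    intro x hx
    exact Int.one_le_abs (by rcases hside with hs | hs <;> linarith [hs x hx])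
  simpa [sum_image hinj, card_image_of_injOn hinj] using
    card_mul_succ_le_two_mul_sum_of_one_le hpos

theorem card_sq_add_le_four_mul_sum_abs_sub {s : Finset ℤ} {c : ℤ} (hc : c ∉ s) :
    (#s : ℤ) ^ 2 + 2 * #s + (#s % 2 : ℕ) ≤ 4 * ∑ x ∈ s, |c - x| := by
  set L := s.filter (· < c)
  set R := s.filter (¬ · < c)
  have hL := card_mul_succ_le_two_mul_sum_abs_sub (s := L) (c := c)
    (.inl fun x hx => (mem_filter.1 hx).2)
  have hR := card_mul_succ_le_two_mul_sum_abs_sub (s := R) (c := c) <| .inr fun x hx => by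
    obtain ⟨hxs, hxc⟩ := mem_filter.1 hx
    exact lt_of_le_of_ne (not_lt.1 hxc) (ne_of_mem_of_not_mem hxs hc).symm
  have hcard : #s = #L + #R := (card_filter_add_card_filter_not _).symm
  have hsum : ∑ x ∈ s, |c - x| = ∑ x ∈ L, |c - x| + ∑ x ∈ R, |c - x| :=
    (sum_filter_add_sum_filter_not _ _ _).symm
  have hpar := Int.emod_two_le_sq_sub #L #R
  rw [hsum, hcard]
  push_cast
  nlinarith

end Finset

/-- In any graph on `n` vertices, for any vertex `i` of degree `kᵢ` and any
linear arrangement `π`, the sum of lengths of the edges incident to `i` is at least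
`(kᵢ²/2 + kᵢ + (kᵢ mod 2)/2)/2`. -/
theorem Dinc_lower_bound (n : ℕ) (G : SimpleGraph (Fin n)) [DecidableRel G.Adj]
    (i : Fin n) (π : Equiv.Perm (Fin n)) :
    ((G.degree i : ℚ) ^ 2 / 2 + (G.degree i : ℚ) +
        ((G.degree i % 2 : ℕ) : ℚ) / 2) / 2 ≤ (Dinc G i π : ℚ) := by
  have hinj : Function.Injective (fun v => (π v : ℤ)) := by
    intro v w h
    simpa [Fin.val_inj] using h
  set s := (G.neighborFinset i).image (fun v => (π v : ℤ))
  have hcard : #s = G.degree i := card_image_of_injective _ hinj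
  have hc : (π i : ℤ) ∉ s := by
    simp only [s, mem_image, SimpleGraph.mem_neighborFinset, Nat.cast_inj, Fin.val_inj,
      EmbeddingLike.apply_eq_iff_eq, not_exists, not_and]
    exact fun v hv => (G.ne_of_adj hv).symm
  have hsum : (Dinc G i π : ℤ) = ∑ x ∈ s, |(π i : ℤ) - x| := by
    rw [sum_image hinj.injOn]
    simp [Dinc]
  have key := card_sq_add_le_four_mul_sum_abs_sub hc
  rw [hcard, ← hsum] at key
  have key_ℚ : ((G.degree i : ℚ) ^ 2 + 2 * G.degree i + (G.degree i % 2 : ℕ)) ≤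
      4 * Dinc G i π := by
    exact_mod_cast key
  linarith
end

section
/- For any tree t on n ≥ 2 vertices, the minimum over all linear arrangements of the sum of edge lengths satisfies D_min(t) ≥ (1/4)·( (1/2)·Σᵢ kᵢ² + 2(n-1) + q/2 ), where kᵢ is the degree of vertex i and q is the number of vertices of odd degree. -/
open Finset

/-! At a vertex `i` of degree `k`, the displacements `π i - π v` to its neighbours are `k` distinct
nonzero integers, so the incident edge lengths add up to at least `1 + 1 + 2 + 2 + ⋯` (`k` terms),
that is `(k² + 2k + k % 2) / 4`. Summing over the vertices counts every edge twice, and the degrees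
of a tree add up to `2 (n - 1)`. -/

namespace Finset

theorem card_le_two_mul_of_forall_natAbs_le {T : Finset ℤ} {m : ℕ} (h0 : 0 ∉ T)
    (hm : ∀ x ∈ T, x.natAbs ≤ m) : #T ≤ 2 * m := by
  have hsub : T ⊆ (Icc (-(m : ℤ)) m).erase 0 := fun x hx => by
    have := hm x hx
    simp only [mem_erase, mem_Icc]
    exact ⟨fun h => h0 (h ▸ hx), by omega, by omega⟩
  calc #T ≤ #((Icc (-(m : ℤ)) m).erase 0) := card_le_card hsub
    _ = 2 * m := by rw [card_erase_of_mem (by simp), Int.card_Icc]; omega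

/-- The left side is `4 (1 + 1 + 2 + 2 + ⋯)` (`#T` terms), the sum for the tightest packing
`T = {±1, ±2, …}`. -/
theorem card_sq_add_le_four_mul_sum_natAbs (T : Finset ℤ) (h0 : 0 ∉ T) :
    #T ^ 2 + 2 * #T + #T % 2 ≤ 4 * ∑ x ∈ T, x.natAbs := by
  induction T using Finset.induction_on_max_value Int.natAbs with
  | empty => simp
  | insert a s has hmax ih =>
    have h0s : 0 ∉ s := fun h => h0 (mem_insert_of_mem h)
    have hcard : #(insert a s) ≤ 2 * a.natAbs :=
      card_le_two_mul_of_forall_natAbs_le h0 fun x hx => by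
        rcases mem_insert.1 hx with rfl | hx
        exacts [le_rfl, hmax x hx]
    rw [card_insert_of_notMem has] at hcard ⊢
    rw [sum_insert has]
    have := ih h0s
    have hsq : (#s + 1) ^ 2 = #s ^ 2 + 2 * #s + 1 := by ring
    omega

theorem sum_mod_two_eq_card_filter {ι : Type*} (s : Finset ι) (f : ι → ℕ) :
    ∑ i ∈ s, f i % 2 = #{i ∈ s | f i % 2 = 1} := by
  rw [card_filter]
  refine sum_congr rfl fun i _ => ?_
  rcases Nat.mod_two_eq_zero_or_one (f i) with h | h <;> simp [h]

end Finset

namespace SimpleGraph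

variable {V M : Type*} [Fintype V] [AddCommMonoid M] (G : SimpleGraph V) [DecidableRel G.Adj]

theorem sum_darts_eq_sum_sum_neighborFinset (f : V → V → M) :
    ∑ d : G.Dart, f d.fst d.snd = ∑ v, ∑ w ∈ G.neighborFinset v, f v w := by
  rw [Finset.sum_sigma']
  exact Finset.sum_bij' (fun d _ => ⟨d.fst, d.snd⟩) (fun x hx => ⟨(x.1, x.2), by simpa using hx⟩)
    (by simp) (by simp) (by simp) (by simp) (by simp)

theorem sum_darts_edge_eq_two_nsmul_sum_edgeFinset [DecidableEq V] (f : Sym2 V → M) :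
    ∑ d : G.Dart, f d.edge = 2 • ∑ e ∈ G.edgeFinset, f e := by
  rw [← Finset.sum_fiberwise_of_maps_to (g := Dart.edge) (t := G.edgeFinset) (by simp),
    Finset.smul_sum]
  refine Finset.sum_congr rfl fun e he => ?_
  rw [Finset.sum_congr rfl fun d hd => congrArg f (Finset.mem_filter.1 hd).2, Finset.sum_const,
    G.dart_edge_fiber_card e (mem_edgeFinset.1 he)]

theorem sum_sum_neighborFinset_eq_two_nsmul_sum_edgeFinset [DecidableEq V] (f : Sym2 V → M) :
    ∑ v, ∑ w ∈ G.neighborFinset v, f s(v, w) = 2 • ∑ e ∈ G.edgeFinset, f e := by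
  rw [← sum_darts_eq_sum_sum_neighborFinset, ← sum_darts_edge_eq_two_nsmul_sum_edgeFinset]
  rfl

end SimpleGraph

section Arrangement

open SimpleGraph

variable {n : ℕ} (G : SimpleGraph (Fin n)) [DecidableRel G.Adj] (π : Equiv.Perm (Fin n))

theorem sum_Dinc_eq_two_mul_D : ∑ i, Dinc G i π = 2 * D G π :=
  G.sum_sum_neighborFinset_eq_two_nsmul_sum_edgeFinset (edgeLen π)

theorem degree_sq_add_le_four_mul_Dinc (i : Fin n) :
    G.degree i ^ 2 + 2 * G.degree i + G.degree i % 2 ≤ 4 * Dinc G i π := by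
  have hinj : Set.InjOn (fun v => (π i : ℤ) - π v) (G.neighborFinset i) := fun v _ w _ h => by
    simpa [Fin.val_inj] using h
  have h0 : 0 ∉ (G.neighborFinset i).image fun v => (π i : ℤ) - π v := by
    simp [sub_eq_zero, Fin.val_inj]
  have := card_sq_add_le_four_mul_sum_natAbs _ h0
  rwa [card_image_of_injOn hinj, sum_image hinj, card_neighborFinset_eq_degree] at this

theorem sum_degree_sq_add_le_eight_mul_D :
    ∑ i, G.degree i ^ 2 + 4 * #G.edgeFinset + #{i | G.degree i % 2 = 1} ≤ 8 * D G π := by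
  have hsum := sum_le_sum fun i (_ : i ∈ univ) => degree_sq_add_le_four_mul_Dinc G π i
  rw [← mul_sum, sum_Dinc_eq_two_mul_D, sum_add_distrib, sum_add_distrib, ← mul_sum,
    sum_degrees_eq_twice_card_edges, sum_mod_two_eq_card_filter] at hsum
  omega

theorem exists_Dmin_eq_D : ∃ π, Dmin G = D G π := by
  obtain ⟨π, -, hπ⟩ := exists_mem_eq_inf' _ (D G)
  exact ⟨π, hπ⟩

end Arrangement

theorem Dmin_degree_method_general (n : ℕ) (G : SimpleGraph (Fin n))
    [DecidableRel G.Adj] (hT : G.IsTree) :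
    (1 / 4 : ℚ) * ((1 / 2) * ∑ v : Fin n, (G.degree v : ℚ) ^ 2 + 2 * ((n : ℚ) - 1) +
        (((Finset.univ.filter fun v : Fin n => G.degree v % 2 = 1).card : ℕ) : ℚ) / 2) ≤
      (Dmin G : ℚ) := by
  obtain ⟨π, hπ⟩ := exists_Dmin_eq_D G
  have hbound : ((∑ i, G.degree i ^ 2 + 4 * #G.edgeFinset + #{i | G.degree i % 2 = 1} : ℕ) : ℚ)
      ≤ 8 * D G π := by exact_mod_cast sum_degree_sq_add_le_eight_mul_D G π
  have hedges : ((#G.edgeFinset + 1 : ℕ) : ℚ) = n := by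
    simpa using congrArg (Nat.cast (R := ℚ)) hT.card_edgeFinset
  push_cast at hbound hedges
  rw [hπ]
  linarith

/-- For any tree on `n ≥ 2` vertices,
`D_min ≥ (1/4)((1/2)Σᵢ kᵢ² + 2(n-1) + q/2)` where `q` is the number of odd-degree
vertices. -/
theorem Dmin_degree_method (n : ℕ) (hn : 2 ≤ n) (G : SimpleGraph (Fin n))
    [DecidableRel G.Adj] (hT : G.IsTree) :
    (1 / 4 : ℚ) * ((1 / 2) * ∑ v : Fin n, (G.degree v : ℚ) ^ 2 + 2 * ((n : ℚ) - 1) +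
        (((Finset.univ.filter fun v : Fin n => G.degree v % 2 = 1).card : ℕ) : ℚ) / 2) ≤
      (Dmin G : ℚ) :=
  Dmin_degree_method_general n G hT
end
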